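/- arXiv:2502.12307 — 4 statements merged into one kernel-verified Lean document; each statement's English description precedes it below -/
import Mathlib

section
/- If a sequence Z over a product alphabet A × B is (μ ⊗ ν)-normal, then its first projection π₀(Z) is μ-normal and its second projection π₁(Z) is ν-normal. -/
open Filter Topology

/-- The prefix `X(0) X(1) ⋯ X(n-1)` of an infinite sequence, as a list. -/
def pref {A : Type*} (X : ℕ → A) (n : ℕ) : List A := (List.range n).map X

/-- Number of occurrences of the word `w` in the prefix `X[0..n]`
(indices `i` with `0 ≤ i ≤ n - |w| + 1`). -/
def nbocc {A : Type*} [DecidableEq A] (w : List A) (X : ℕ → A) (n : ℕ) : ℕ :=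
  ((Finset.range (n + 2 - w.length)).filter
    (fun i => (List.range w.length).map (fun j => X (i + j)) = w)).card

/-- Frequency of occurrences of `w` in `X[0..n]`. -/
noncomputable def freq {A : Type*} [DecidableEq A] (w : List A) (X : ℕ → A) (n : ℕ) : ℝ :=
  (nbocc w X n : ℝ) / ((n + 2 - w.length : ℕ) : ℝ)

/-- The Bernoulli measure of a word: product of the measures of its letters. -/
def wmeas {A : Type*} (μ : A → ℝ) (w : List A) : ℝ := (w.map μ).prod

/-- `X` is `μ`-normal: every nonempty word occurs with asymptotic frequency `μ(w)`. -/
def BNormal {A : Type*} [DecidableEq A] (μ : A → ℝ) (X : ℕ → A) : Prop :=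
  ∀ w : List A, w ≠ [] → Tendsto (fun n => freq w X n) atTop (𝓝 (wmeas μ w))

/-- Iterated transition function of a deterministic automaton. -/
def dstar {Q A : Type*} (δ : Q → A → Q) (q : Q) (w : List A) : Q := w.foldl δ q

/-- Capital of an automatic gambler started in state `q` after reading `w`. -/
def capital {Q A : Type*} (δ : Q → A → Q) (γ : Q → A → ℝ) : Q → List A → ℝ
  | _, [] => 1
  | q, a :: w => γ q a * capital δ γ (δ q a) w

/-!
A projection is a letter-to-letter coding. An occurrence of a word `u` in the coded sequence
is an occurrence in `Z` of exactly one word `v` mapping letterwise to `u`, so the frequency of `u`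
is a finite sum of frequencies of such `v`. The limit is the sum of their product measures,
which factors letter by letter into the marginal of `μ ⊗ ν`, i.e. `μ(u)` (resp. `ν(u)`).
-/

open Finset

section Occurrences

variable {C D : Type*} [DecidableEq C]

lemma nbocc_ofFn {k : ℕ} (v : Fin k → C) (X : ℕ → C) (n : ℕ) :
    nbocc (List.ofFn v) X n = #{i ∈ range (n + 2 - k) | (fun j : Fin k => X (i + j)) = v} := by
  have window : ∀ i, (List.range k).map (fun j => X (i + j))
      = List.ofFn (fun j : Fin k => X (i + j)) := fun i => by
    apply List.ext_getElem <;> simp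
  simp only [nbocc, List.length_ofFn, window, List.ofFn_inj]

lemma nbocc_map [Fintype C] [DecidableEq D] (f : C → D) {k : ℕ} (u : Fin k → D)
    (X : ℕ → C) (n : ℕ) :
    nbocc (List.ofFn u) (fun m => f (X m)) n
      = ∑ v ∈ Fintype.piFinset (fun j => {c | f c = u j}), nbocc (List.ofFn v) X n := by
  rw [nbocc_ofFn, card_eq_sum_card_fiberwise (f := fun i (j : Fin k) => X (i + j))
    (t := Fintype.piFinset fun j => {c | f c = u j})]
  · refine sum_congr rfl fun v hv => ?_
    simp only [Fintype.mem_piFinset, mem_filter, mem_univ, true_and] at hv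
    rw [nbocc_ofFn, filter_filter]
    refine congrArg card (filter_congr fun i _ => ⟨And.right, fun hi => ⟨?_, hi⟩⟩)
    rw [← funext hv, ← hi]
  · intro i hi
    rw [mem_coe, mem_filter] at hi
    rw [mem_coe, Fintype.mem_piFinset]
    exact fun j => mem_filter.mpr ⟨mem_univ _, congrFun hi.2 j⟩

end Occurrences

lemma wmeas_ofFn {C : Type*} (ξ : C → ℝ) {k : ℕ} (v : Fin k → C) :
    wmeas ξ (List.ofFn v) = ∏ j, ξ (v j) := by
  rw [wmeas, List.map_ofFn, List.prod_ofFn]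
  rfl

theorem BNormal.map {C D : Type*} [Fintype C] [DecidableEq C] [DecidableEq D]
    {ξ : C → ℝ} {X : ℕ → C} (h : BNormal ξ X) (f : C → D) {η : D → ℝ}
    (hη : ∀ d, η d = ∑ c with f c = d, ξ c) :
    BNormal η (fun n => f (X n)) := by
  intro w hw
  obtain ⟨k, u, rfl⟩ : ∃ k, ∃ u : Fin k → D, w = List.ofFn u := ⟨_, _, (List.ofFn_get w).symm⟩
  have hfreq : (fun n => freq (List.ofFn u) (fun m => f (X m)) n)
      = fun n => ∑ v ∈ Fintype.piFinset (fun j => {c | f c = u j}), freq (List.ofFn v) X n := by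
    funext n
    simp only [freq, nbocc_map, List.length_ofFn, Nat.cast_sum, sum_div]
  have hmeas : wmeas η (List.ofFn u)
      = ∑ v ∈ Fintype.piFinset (fun j => {c | f c = u j}), wmeas ξ (List.ofFn v) := by
    simp only [wmeas_ofFn, hη, prod_univ_sum]
  rw [hfreq, hmeas]
  refine tendsto_finsetSum _ fun v _ => h _ ?_
  simpa [List.ofFn_eq_nil_iff] using hw

lemma eq_sum_fst_fiber_mul {A B : Type*} [Fintype A] [DecidableEq A] [Fintype B]
    (μ : A → ℝ) (ν : B → ℝ) (hνsum : ∑ b, ν b = 1) (a : A) :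
    μ a = ∑ p : A × B with p.1 = a, μ p.1 * ν p.2 := by
  rw [sum_filter, Fintype.sum_prod_type]
  simp [← mul_sum, hνsum]

lemma eq_sum_snd_fiber_mul {A B : Type*} [Fintype A] [Fintype B] [DecidableEq B]
    (μ : A → ℝ) (ν : B → ℝ) (hμsum : ∑ a, μ a = 1) (b : B) :
    ν b = ∑ p : A × B with p.2 = b, μ p.1 * ν p.2 := by
  rw [sum_filter, Fintype.sum_prod_type_right]
  simp [← sum_mul, hμsum]

theorem projections_of_product_normal_general
    {A B : Type*} [Fintype A] [DecidableEq A] [Fintype B] [DecidableEq B]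
    (μ : A → ℝ) (ν : B → ℝ)
    (hμsum : ∑ a, μ a = 1) (hνsum : ∑ b, ν b = 1)
    (Z : ℕ → A × B)
    (hZ : BNormal (fun p : A × B => μ p.1 * ν p.2) Z) :
    BNormal μ (fun n => (Z n).1) ∧ BNormal ν (fun n => (Z n).2) :=
  ⟨hZ.map Prod.fst (eq_sum_fst_fiber_mul μ ν hνsum), hZ.map Prod.snd (eq_sum_snd_fiber_mul μ ν hμsum)⟩

/-- if `Z` over `A × B` is `(μ ⊗ ν)`-normal, then its projections are
`μ`-normal and `ν`-normal respectively. -/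
theorem projections_of_product_normal
    {A B : Type*} [Fintype A] [DecidableEq A] [Fintype B] [DecidableEq B]
    (μ : A → ℝ) (ν : B → ℝ) (hμpos : ∀ a, 0 < μ a) (hνpos : ∀ b, 0 < ν b)
    (hμsum : ∑ a, μ a = 1) (hνsum : ∑ b, ν b = 1)
    (Z : ℕ → A × B)
    (hZ : BNormal (fun p : A × B => μ p.1 * ν p.2) Z) :
    BNormal μ (fun n => (Z n).1) ∧ BNormal ν (fun n => (Z n).2) :=
  projections_of_product_normal_general μ ν hμsum hνsum Z hZ
end

section
/- Let 𝒢 be a μ-gambler whose only betting state is r (all other states have betting function constantly 1), and suppose γ(r, a) > 0 for all a. Let Y be the (infinite) subsequence of letters of X read while the automaton is in state r. If Y is μ-balanced (each letter a occurs in Y with asymptotic frequency μ(a)) and γ(r, ·) is not constantly 1, then capital(𝒢, X[0..n]) → 0 as n → ∞; in particular 𝒢 does not win. -/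
open Filter Topology

/-!
Only the visits to `r` change the capital, so after `n` letters it is the product of the bets
`γ r (Y j)` over the first `k n` letters of `Y`, where `k n → ∞` counts the visits before `n`.
Balancedness makes the logarithm of this product grow like `k n * ∑ a, μ a * log (γ r a)`, and
strict concavity of `log` makes that mean `< log (∑ a, μ a * γ r a) = 0`.
-/

open Finset

lemma pref_succ {A : Type*} (X : ℕ → A) (n : ℕ) : pref X (n + 1) = pref X n ++ [X n] := by
  simp [pref, List.range_succ]

lemma capital_append_singleton {Q A : Type*} (δ : Q → A → Q) (γ : Q → A → ℝ) (q : Q)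
    (w : List A) (a : A) :
    capital δ γ q (w ++ [a]) = capital δ γ q w * γ (dstar δ q w) a := by
  induction w generalizing q with
  | nil => simp [capital, dstar]
  | cons b w ih => simp [capital, ih, dstar, mul_assoc]

lemma capital_pref_eq_prod {Q A : Type*} (δ : Q → A → Q) (γ : Q → A → ℝ) (q : Q)
    (X : ℕ → A) (n : ℕ) :
    capital δ γ q (pref X n) = ∏ i ∈ range n, γ (dstar δ q (pref X i)) (X i) := by
  induction n with
  | zero => simp [pref, capital]
  | succ n ih => rw [pref_succ, capital_append_singleton, ih, prod_range_succ]

section Subsequence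

variable {φ : ℕ → ℕ} [DecidablePred (· ∈ Set.range φ)]

lemma StrictMono.count_range_apply (hφ : StrictMono φ) (j : ℕ) :
    Nat.count (· ∈ Set.range φ) (φ j) = j := by
  have h : {i ∈ range (φ j) | i ∈ Set.range φ} = (range j).image φ := by
    ext i
    simp only [mem_filter, mem_range, mem_image, Set.mem_range]
    constructor
    · rintro ⟨hi, k, rfl⟩
      exact ⟨k, hφ.lt_iff_lt.mp hi, rfl⟩
    · rintro ⟨k, hk, rfl⟩
      exact ⟨hφ hk, k, rfl⟩
  rw [Nat.count_eq_card_filter_range, h, card_image_of_injective _ hφ.injective, card_range]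

lemma StrictMono.lt_count_range_iff (hφ : StrictMono φ) {j n : ℕ} :
    j < Nat.count (· ∈ Set.range φ) n ↔ φ j < n := by
  constructor
  · intro hj
    exact Nat.lt_of_count_lt_count (p := (· ∈ Set.range φ)) (by rwa [hφ.count_range_apply])
  · intro hn
    simpa only [hφ.count_range_apply] using
      Nat.count_strict_mono (p := (· ∈ Set.range φ)) ⟨j, rfl⟩ hn

lemma StrictMono.tendsto_count_range (hφ : StrictMono φ) :
    Tendsto (Nat.count (· ∈ Set.range φ)) atTop atTop :=
  (Nat.count_monotone _).tendsto_atTop_atTop fun j => ⟨φ j, (hφ.count_range_apply j).ge⟩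

lemma StrictMono.prod_range_eq_prod_range_count {M : Type*} [CommMonoid M] (hφ : StrictMono φ)
    {f : ℕ → M} (hf : ∀ i ∉ Set.range φ, f i = 1) (n : ℕ) :
    ∏ i ∈ range n, f i = ∏ j ∈ range (Nat.count (· ∈ Set.range φ) n), f (φ j) := by
  have h : {i ∈ range n | i ∈ Set.range φ} = (range (Nat.count (· ∈ Set.range φ) n)).image φ := by
    ext i
    simp only [mem_filter, mem_range, mem_image, Set.mem_range, hφ.lt_count_range_iff]
    constructor
    · rintro ⟨hi, k, rfl⟩
      exact ⟨k, hi, rfl⟩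
    · rintro ⟨k, hk, rfl⟩
      exact ⟨hk, k, rfl⟩
  rw [← prod_filter_of_ne fun i _ hi => not_imp_comm.mp (hf i) hi, h,
    prod_image fun _ _ _ _ h => hφ.injective h]

end Subsequence

lemma sum_mul_log_lt_zero {ι : Type*} [Fintype ι] {w g : ι → ℝ} (hw : ∀ i, 0 < w i)
    (hw₁ : ∑ i, w i = 1) (hg : ∀ i, 0 < g i) (hmean : ∑ i, w i * g i = 1) (hne : ∃ i, g i ≠ 1) :
    ∑ i, w i * Real.log (g i) < 0 := by
  obtain ⟨i₀, hi₀⟩ := hne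
  obtain ⟨i₁, hi₁⟩ : ∃ i₁, g i₁ ≠ g i₀ := by
    by_contra! hconst
    simp only [hconst, ← sum_mul, hw₁, one_mul] at hmean
    exact hi₀ hmean
  have := strictConcaveOn_log_Ioi.lt_map_sum (fun i _ => hw i) hw₁ (fun i _ => hg i)
    ⟨i₁, mem_univ _, i₀, mem_univ _, hi₁⟩
  simpa only [smul_eq_mul, hmean, Real.log_one] using this

lemma tendsto_atBot_of_tendsto_div_natCast {u : ℕ → ℝ} {L : ℝ} (hL : L < 0)
    (hu : Tendsto (fun m => u m / m) atTop (𝓝 L)) : Tendsto u atTop atBot := by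
  refine (hu.neg_mul_atTop hL tendsto_natCast_atTop_atTop).congr' ?_
  filter_upwards [eventually_ne_atTop 0] with m hm
  field_simp

/-- The paper's `μ`-balanced sequences. -/
def IsBalancedSeq {A : Type*} [DecidableEq A] (μ : A → ℝ) (Y : ℕ → A) : Prop :=
  ∀ a, Tendsto (fun k => (#{j ∈ range k | Y j = a} : ℝ) / k) atTop (𝓝 (μ a))

section BalancedSeq

variable {A : Type*} [Fintype A] [DecidableEq A]

lemma prod_range_comp_eq_prod_pow_card {M : Type*} [CommMonoid M] (g : A → M) (Y : ℕ → A)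
    (m : ℕ) : ∏ j ∈ range m, g (Y j) = ∏ a, g a ^ #{j ∈ range m | Y j = a} := by
  simp_rw [← prod_fiberwise' (range m) Y g, prod_const]

lemma IsBalancedSeq.tendsto_log_prod_div {μ : A → ℝ} {Y : ℕ → A} (hY : IsBalancedSeq μ Y)
    {g : A → ℝ} (hg : ∀ a, 0 < g a) :
    Tendsto (fun m => Real.log (∏ j ∈ range m, g (Y j)) / m) atTop
      (𝓝 (∑ a, μ a * Real.log (g a))) := by
  have h : ∀ m : ℕ, Real.log (∏ j ∈ range m, g (Y j)) / m =
      ∑ a, (#{j ∈ range m | Y j = a} : ℝ) / m * Real.log (g a) := by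
    intro m
    rw [prod_range_comp_eq_prod_pow_card, Real.log_prod fun a _ => (pow_pos (hg a) _).ne',
      sum_div]
    simp only [Real.log_pow, mul_div_right_comm]
  simp only [h]
  exact tendsto_finsetSum _ fun a _ => ((hY a).mul_const _).congr fun m => by ring

lemma IsBalancedSeq.tendsto_prod_zero {μ : A → ℝ} {Y : ℕ → A} (hY : IsBalancedSeq μ Y)
    {g : A → ℝ} (hg : ∀ a, 0 < g a) (hlog : ∑ a, μ a * Real.log (g a) < 0) :
    Tendsto (fun m => ∏ j ∈ range m, g (Y j)) atTop (𝓝 0) := by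
  have hbot := tendsto_atBot_of_tendsto_div_natCast hlog (hY.tendsto_log_prod_div hg)
  refine (Real.tendsto_exp_atBot.comp hbot).congr fun m => ?_
  exact Real.exp_log (prod_pos fun j _ => hg (Y j))

end BalancedSeq

theorem single_state_gambler_capital_to_zero_general
    {Q A : Type*} [Fintype A] [DecidableEq A]
    (μ : A → ℝ) (hμpos : ∀ a, 0 < μ a) (hμsum : ∑ a, μ a = 1)
    (δ : Q → A → Q) (γ : Q → A → ℝ) (qI r : Q)
    (hfair : ∀ q, ∑ a, μ a * γ q a = 1)
    (honly : ∀ q a, q ≠ r → γ q a = 1)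
    (hpos : ∀ a, 0 < γ r a)
    (hnontriv : ∃ a, γ r a ≠ 1)
    (X : ℕ → A) (φ : ℕ → ℕ) (hφ : StrictMono φ)
    (hφrange : Set.range φ = {i : ℕ | dstar δ qI (pref X i) = r})
    (hbal : ∀ a : A,
      Tendsto (fun k => (((Finset.range k).filter (fun j => X (φ j) = a)).card : ℝ) / k)
        atTop (𝓝 (μ a))) :
    Tendsto (fun n => capital δ γ qI (pref X n)) atTop (𝓝 0) := by
  classical
  have hstate : ∀ i, i ∈ Set.range φ ↔ dstar δ qI (pref X i) = r := Set.ext_iff.mp hφrange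
  have hcap : ∀ n, capital δ γ qI (pref X n) =
      ∏ j ∈ range (Nat.count (· ∈ Set.range φ) n), γ r (X (φ j)) := by
    intro n
    rw [capital_pref_eq_prod, hφ.prod_range_eq_prod_range_count
      (fun i hi => honly _ _ (mt (hstate i).mpr hi))]
    exact prod_congr rfl fun j _ => by rw [(hstate _).mp ⟨j, rfl⟩]
  have hlog := sum_mul_log_lt_zero hμpos hμsum hpos (hfair r) hnontriv
  simp only [hcap]
  exact ((show IsBalancedSeq μ (fun j => X (φ j)) from hbal).tendsto_prod_zero hpos hlog).comp
    hφ.tendsto_count_range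

/-- a `μ`-gambler whose only betting state is `r`, with positive bets that
are not constantly `1`, loses all its capital on any `X` such that the subsequence `Y`
of letters read in state `r` is infinite and `μ`-balanced. -/
theorem single_state_gambler_capital_to_zero
    {Q A : Type*} [Fintype Q] [DecidableEq Q] [Fintype A] [DecidableEq A]
    (μ : A → ℝ) (hμpos : ∀ a, 0 < μ a) (hμsum : ∑ a, μ a = 1)
    (δ : Q → A → Q) (γ : Q → A → ℝ) (qI r : Q)
    (hfair : ∀ q, ∑ a, μ a * γ q a = 1)
    (honly : ∀ q a, q ≠ r → γ q a = 1)
    (hpos : ∀ a, 0 < γ r a)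
    (hnontriv : ∃ a, γ r a ≠ 1)
    (X : ℕ → A) (φ : ℕ → ℕ) (hφ : StrictMono φ)
    (hφrange : Set.range φ = {i : ℕ | dstar δ qI (pref X i) = r})
    (hbal : ∀ a : A,
      Tendsto (fun k => (((Finset.range k).filter (fun j => X (φ j) = a)).card : ℝ) / k)
        atTop (𝓝 (μ a))) :
    Tendsto (fun n => capital δ γ qI (pref X n)) atTop (𝓝 0) :=
  single_state_gambler_capital_to_zero_general μ hμpos hμsum δ γ qI r hfair honly hpos hnontriv X φ
    hφ hφrange hbal
end

section
/- If X ∈ A^ω is μ-normal and Y ∈ B^ω is drawn at random according to the Bernoulli measure ν on B (i.e., Y(0), Y(1), … are i.i.d. with distribution ν), then ν-almost surely the joined sequence X ⊗ Y, defined by (X ⊗ Y)(n) = (X(n), Y(n)), is (μ ⊗ ν)-normal over the alphabet A × B. -/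
open Filter Topology

open MeasureTheory

/-!
Fix a word `w` over `A × B` with projections `u` over `A` and `v` over `B`. With `cᵢ` the
indicator of an occurrence of `u` in `X` at `i` and `Zᵢ` that of `v` in `Y`, the occurrences of
`w` in `X ⊗ Y` before `N` number `∑_{i<N} cᵢ (Zᵢ - ν(v)) + ν(v) ∑_{i<N} cᵢ`. By normality of `X` the
second term is `N ν(v) μ(u) + o(N)`. In the first, the summands are centred, bounded by `1`, and
independent as soon as their windows `[i, i + |w|)` are disjoint, so in the expanded fourth power
only the `O(|w|² N²)` index quadruples whose windows pair off survive; Markov's inequality and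
Borel–Cantelli then make it `o(N)` almost surely. Only countably many words need to be handled.

All probabilities are bounded through finite unions of cylinders, by finite sums of cylinder
weights, so no measurability of the events involved is needed.
-/

section WeightedSums

variable {ι B : Type*} [Fintype ι] [DecidableEq ι] [Fintype B] {w : B → ℝ}

theorem sum_pi_prod_eq_one (hw : ∑ b, w b = 1) : ∑ v : ι → B, ∏ i, w (v i) = 1 := by
  rw [← Fintype.prod_sum (fun _ b => w b)]
  simp [hw]

theorem sum_pi_prod_mul_apply (hw : ∑ b, w b = 1) (i : ι) (g : B → ℝ) :
    ∑ v : ι → B, (∏ j, w (v j)) * g (v i) = ∑ b, w b * g b := by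
  have hv : ∀ v : ι → B, (∏ j, w (v j)) * g (v i)
      = ∏ j, w (v j) * (if j = i then g (v j) else 1) := by
    intro v
    rw [Finset.prod_mul_distrib, Fintype.prod_ite_eq']
  have hb : ∀ j, ∑ b, w b * (if j = i then g b else 1) = if j = i then ∑ b, w b * g b else 1 := by
    intro j
    split_ifs <;> simp [hw]
  simp_rw [hv, ← Fintype.prod_sum (fun j b => w b * (if j = i then g b else 1)), hb,
    Fintype.prod_ite_eq']

theorem sum_pi_prod_mul_mul_of_dependsOn (hw : ∑ b, w b = 1) (s : Set ι) [DecidablePred (· ∈ s)]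
    {F G : (ι → B) → ℝ} (hF : DependsOn F s) (hG : DependsOn G sᶜ) :
    ∑ v : ι → B, (∏ i, w (v i)) * (F v * G v)
      = (∑ v : ι → B, (∏ i, w (v i)) * F v) * ∑ v : ι → B, (∏ i, w (v i)) * G v := by
  have : Nonempty B := by
    by_contra h
    simp [not_nonempty_iff.mp h] at hw
  let e := (Equiv.piEquivPiSubtypeProd (· ∈ s) (fun _ => B)).symm
  have he : ∀ x y, ∏ i, w (e (x, y) i) = (∏ i, w (x i)) * ∏ i, w (y i) := by
    intro x y
    rw [← Fintype.prod_subtype_mul_prod_subtype (· ∈ s)]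
    congr 1 <;> refine Finset.prod_congr rfl fun i _ => ?_ <;>
      simp [e, Equiv.piEquivPiSubtypeProd_symm_apply, i.2]
  have split : ∀ H : (ι → B) → ℝ, ∑ v : ι → B, (∏ i, w (v i)) * H v
      = ∑ x, ∑ y, (∏ i, w (x i)) * (∏ i, w (y i)) * H (e (x, y)) := by
    intro H
    rw [← e.sum_comp, Fintype.sum_prod_type]
    simp_rw [he]
  -- `f (e (x, y))` does not depend on `y`, and `g (e (x, y))` does not depend on `x`
  have key : ∀ {f g : (ι → B) → ℝ}, DependsOn f s → DependsOn g sᶜ →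
      ∑ v : ι → B, (∏ i, w (v i)) * (f v * g v)
        = (∑ x, (∏ i, w (x i)) * f (e (x, fun _ => Classical.arbitrary B)))
          * ∑ y, (∏ i, w (y i)) * g (e (fun _ => Classical.arbitrary B, y)) := by
    intro f g hf hg
    rw [split, Finset.sum_mul_sum]
    refine Finset.sum_congr rfl fun x _ => Finset.sum_congr rfl fun y _ => ?_
    rw [hf (fun i hi => ?_), hg (fun i hi => ?_)]
    · ring
    · simp [e, Equiv.piEquivPiSubtypeProd_symm_apply, show i ∉ s from hi]
    · simp [e, Equiv.piEquivPiSubtypeProd_symm_apply, show i ∈ s from hi]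
  -- taking the other factor to be `1` identifies the two sums in `key`
  have hF1 := key hF (dependsOn_const (1 : ℝ) |>.mono (Set.empty_subset _))
  have h1G := key (dependsOn_const (1 : ℝ) |>.mono (Set.empty_subset _)) hG
  simp only [mul_one, one_mul, sum_pi_prod_eq_one hw] at hF1 h1G
  rw [key hF hG, hF1, h1G]

end WeightedSums

section BernoulliExpectation

variable {B : Type*}

def extendFin (b₀ : B) {L : ℕ} (v : Fin L → B) : ℕ → B :=
  fun n => if h : n < L then v ⟨n, h⟩ else b₀

theorem DependsOn.comp_extendFin {b₀ : B} {L : ℕ} {f : (ℕ → B) → ℝ} {s : Set ℕ}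
    (hf : DependsOn f s) :
    DependsOn (fun v : Fin L → B => f (extendFin b₀ v)) {j | (j : ℕ) ∈ s} := by
  intro v v' h
  refine hf fun n hn => ?_
  unfold extendFin
  split_ifs with hnL
  exacts [h ⟨n, hnL⟩ hn, rfl]

theorem DependsOn.apply_extendFin {b₀ : B} {L : ℕ} {f : (ℕ → B) → ℝ}
    (hf : DependsOn f (Set.Iio L)) (Y : ℕ → B) : f (extendFin b₀ fun j : Fin L => Y j) = f Y :=
  hf fun n hn => by simp [extendFin, show n < L from hn]

theorem pref_eq_ofFn (Y : ℕ → B) (L : ℕ) : pref Y L = List.ofFn fun j : Fin L => Y j := by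
  apply List.ext_getElem <;> simp [pref]

theorem measure_cylinder_eq [MeasurableSpace B] {P : Measure (ℕ → B)} {ν : B → ℝ}
    (hP : ∀ v : List B, P {Y | pref Y v.length = v} = ENNReal.ofReal (wmeas ν v))
    {L : ℕ} (v : Fin L → B) :
    P {Y : ℕ → B | (fun j : Fin L => Y j) = v} = ENNReal.ofReal (∏ j, ν (v j)) := by
  have h := hP (List.ofFn v)
  simp only [List.length_ofFn, pref_eq_ofFn, List.ofFn_inj] at h
  rwa [wmeas, List.map_ofFn, List.prod_ofFn] at h

variable [Fintype B]

/-- Expectation under the product weights `ν` on the first `L` coordinates, the later ones being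
frozen to `b₀`. -/
def bernoulliExpect (ν : B → ℝ) (b₀ : B) (L : ℕ) : ((ℕ → B) → ℝ) →ₗ[ℝ] ℝ where
  toFun f := ∑ v : Fin L → B, (∏ j, ν (v j)) * f (extendFin b₀ v)
  map_add' f g := by simp only [Pi.add_apply, mul_add, Finset.sum_add_distrib]
  map_smul' c f := by
    simp only [Pi.smul_apply, smul_eq_mul, Finset.mul_sum, RingHom.id_apply]
    exact Finset.sum_congr rfl fun v _ => by ring

variable {ν : B → ℝ} {b₀ : B}

theorem bernoulliExpect_apply (L : ℕ) (f : (ℕ → B) → ℝ) :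
    bernoulliExpect ν b₀ L f = ∑ v : Fin L → B, (∏ j, ν (v j)) * f (extendFin b₀ v) := rfl

theorem bernoulliExpect_const (hν1 : ∑ b, ν b = 1) (L : ℕ) (c : ℝ) :
    bernoulliExpect ν b₀ L (fun _ => c) = c := by
  rw [bernoulliExpect_apply, ← Finset.sum_mul, sum_pi_prod_eq_one hν1, one_mul]

theorem bernoulliExpect_apply_coord (hν1 : ∑ b, ν b = 1) {L i : ℕ} (hi : i < L) (g : B → ℝ) :
    bernoulliExpect ν b₀ L (fun Y => g (Y i)) = ∑ b, ν b * g b := by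
  rw [bernoulliExpect_apply, ← sum_pi_prod_mul_apply hν1 (⟨i, hi⟩ : Fin L) g]
  simp [extendFin, hi]

theorem bernoulliExpect_mul_of_dependsOn (hν1 : ∑ b, ν b = 1) (L : ℕ) {f g : (ℕ → B) → ℝ}
    {s : Set ℕ} (hf : DependsOn f s) (hg : DependsOn g sᶜ) :
    bernoulliExpect ν b₀ L (f * g)
      = bernoulliExpect ν b₀ L f * bernoulliExpect ν b₀ L g := by
  classical
  exact sum_pi_prod_mul_mul_of_dependsOn hν1 {j : Fin L | (j : ℕ) ∈ s} hf.comp_extendFin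
    hg.comp_extendFin

theorem abs_bernoulliExpect_le (hν0 : ∀ b, 0 ≤ ν b) (hν1 : ∑ b, ν b = 1) (L : ℕ)
    {f : (ℕ → B) → ℝ} {C : ℝ} (hf : ∀ Y, |f Y| ≤ C) : |bernoulliExpect ν b₀ L f| ≤ C := by
  have hρ : ∀ v : Fin L → B, 0 ≤ ∏ j, ν (v j) := fun v => Finset.prod_nonneg fun j _ => hν0 _
  calc |bernoulliExpect ν b₀ L f|
      ≤ ∑ v : Fin L → B, |(∏ j, ν (v j)) * f (extendFin b₀ v)| := Finset.abs_sum_le_sum_abs _ _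
    _ ≤ ∑ v : Fin L → B, (∏ j, ν (v j)) * C := by
      gcongr with v
      rw [abs_mul, abs_of_nonneg (hρ v)]
      exact mul_le_mul_of_nonneg_left (hf _) (hρ v)
    _ = C := by rw [← Finset.sum_mul, sum_pi_prod_eq_one hν1, one_mul]

theorem measure_le_bernoulliExpect [MeasurableSpace B] {P : Measure (ℕ → B)}
    (hν0 : ∀ b, 0 ≤ ν b)
    (hP : ∀ v : List B, P {Y | pref Y v.length = v} = ENNReal.ofReal (wmeas ν v))
    {L : ℕ} {f : (ℕ → B) → ℝ} (hf : DependsOn f (Set.Iio L)) (hf0 : ∀ Y, 0 ≤ f Y)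
    {c : ℝ} (hc : 0 < c) :
    P {Y | c ≤ f Y} ≤ ENNReal.ofReal (bernoulliExpect ν b₀ L f / c) := by
  classical
  have hρ : ∀ v : Fin L → B, 0 ≤ ∏ j, ν (v j) := fun v => Finset.prod_nonneg fun j _ => hν0 _
  set V := Finset.univ.filter fun v : Fin L → B => c ≤ f (extendFin b₀ v)
  have hsub : {Y | c ≤ f Y} ⊆ ⋃ v ∈ V, {Y : ℕ → B | (fun j : Fin L => Y j) = v} := by
    intro Y hY
    simp only [Set.mem_iUnion, Set.mem_ofPred_eq, V, Finset.mem_filter, Finset.mem_univ, true_and,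
      exists_prop, exists_eq_right']
    rwa [hf.apply_extendFin]
  have hV : ∑ v ∈ V, ∏ j, ν (v j) ≤ bernoulliExpect ν b₀ L f / c := by
    rw [bernoulliExpect_apply, Finset.sum_div]
    calc ∑ v ∈ V, ∏ j, ν (v j) ≤ ∑ v ∈ V, (∏ j, ν (v j)) * f (extendFin b₀ v) / c := by
          refine Finset.sum_le_sum fun v hv => ?_
          rw [le_div_iff₀ hc]
          exact mul_le_mul_of_nonneg_left (Finset.mem_filter.mp hv).2 (hρ v)
      _ ≤ _ := Finset.sum_le_sum_of_subset_of_nonneg V.subset_univ fun v _ _ =>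
          div_nonneg (mul_nonneg (hρ v) (hf0 _)) hc.le
  calc P {Y | c ≤ f Y} ≤ ∑ v ∈ V, P {Y : ℕ → B | (fun j : Fin L => Y j) = v} :=
        (measure_mono hsub).trans (measure_biUnion_finset_le V _)
    _ = ENNReal.ofReal (∑ v ∈ V, ∏ j, ν (v j)) := by
        simp_rw [measure_cylinder_eq hP, ENNReal.ofReal_sum_of_nonneg fun v _ => hρ v]
    _ ≤ _ := ENNReal.ofReal_le_ofReal hV

end BernoulliExpectation

section WordIndicator

variable {B : Type*}

theorem wmeas_join {A : Type*} (μ : A → ℝ) (ν : B → ℝ) (w : List (A × B)) :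
    wmeas (fun q : A × B => μ q.1 * ν q.2) w
      = wmeas μ (w.map Prod.fst) * wmeas ν (w.map Prod.snd) := by
  induction w with
  | nil => simp [wmeas]
  | cons q w ih =>
    simp only [wmeas, List.map_cons, List.prod_cons] at ih ⊢
    rw [ih]
    ring

theorem wmeas_nonneg {ν : B → ℝ} (hν0 : ∀ b, 0 ≤ ν b) (w : List B) : 0 ≤ wmeas ν w :=
  List.prod_nonneg fun _ hx => by
    obtain ⟨b, -, rfl⟩ := List.mem_map.mp hx
    exact hν0 b

theorem wmeas_le_one [Fintype B] {ν : B → ℝ} (hν0 : ∀ b, 0 ≤ ν b) (hν1 : ∑ b, ν b = 1)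
    (w : List B) : wmeas ν w ≤ 1 := by
  have hle : ∀ b, ν b ≤ 1 := fun b =>
    hν1 ▸ Finset.single_le_sum (fun b _ => hν0 b) (Finset.mem_univ b)
  simpa [wmeas] using
    List.prod_map_le_prod_map₀ ν (fun _ => 1) (fun b _ => hν0 b) (fun b _ => hle b)

variable [DecidableEq B]

def wordIndicator (w : List B) (i : ℕ) (Y : ℕ → B) : ℝ :=
  if (List.range w.length).map (fun j => Y (i + j)) = w then 1 else 0

theorem wordIndicator_nil (i : ℕ) (Y : ℕ → B) : wordIndicator [] i Y = 1 := by
  simp [wordIndicator]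

theorem wordIndicator_cons (b : B) (w : List B) (i : ℕ) (Y : ℕ → B) :
    wordIndicator (b :: w) i Y = (if Y i = b then 1 else 0) * wordIndicator w (i + 1) Y := by
  simp only [wordIndicator, List.length_cons, List.range_succ_eq_map, List.map_cons,
    List.map_map, List.cons.injEq, Function.comp_def, add_zero]
  rw [show (fun j => Y (i + (j + 1))) = fun j => Y (i + 1 + j) from funext fun j => by
    rw [Nat.add_right_comm, add_assoc]]
  split_ifs <;> simp_all

theorem wordIndicator_eq_zero_or_one (w : List B) (i : ℕ) (Y : ℕ → B) :
    wordIndicator w i Y = 0 ∨ wordIndicator w i Y = 1 := by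
  unfold wordIndicator
  split_ifs <;> simp

theorem dependsOn_wordIndicator (w : List B) (i : ℕ) :
    DependsOn (wordIndicator w i) (Set.Ico i (i + w.length)) := by
  intro Y Y' h
  have : (List.range w.length).map (fun j => Y (i + j))
      = (List.range w.length).map (fun j => Y' (i + j)) :=
    List.map_congr_left fun j hj => h _ ⟨by omega, by simp at hj; omega⟩
  simp only [wordIndicator, this]

theorem wordIndicator_join {A : Type*} [DecidableEq A] (w : List (A × B)) (i : ℕ) (X : ℕ → A)
    (Y : ℕ → B) :
    wordIndicator w i (fun n => (X n, Y n))
      = wordIndicator (w.map Prod.fst) i X * wordIndicator (w.map Prod.snd) i Y := by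
  induction w generalizing i with
  | nil => simp [wordIndicator_nil]
  | cons q w ih =>
    simp only [wordIndicator_cons, List.map_cons, ih, Prod.ext_iff]
    split_ifs <;> simp_all

theorem nbocc_eq_sum_wordIndicator (w : List B) (Y : ℕ → B) (n : ℕ) :
    (nbocc w Y n : ℝ) = ∑ i ∈ Finset.range (n + 2 - w.length), wordIndicator w i Y := by
  rw [nbocc, Finset.natCast_card_filter]
  rfl

theorem freq_join_eq {A : Type*} [DecidableEq A] (w : List (A × B)) (X : ℕ → A) (Y : ℕ → B)
    (p : ℝ) (n : ℕ) :
    freq w (fun m => (X m, Y m)) n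
      = (∑ i ∈ Finset.range (n + 2 - w.length),
            wordIndicator (w.map Prod.fst) i X * (wordIndicator (w.map Prod.snd) i Y - p))
          / ((n + 2 - w.length : ℕ) : ℝ)
        + p * freq (w.map Prod.fst) X n := by
  simp only [freq, nbocc_eq_sum_wordIndicator, wordIndicator_join, List.length_map, mul_sub,
    Finset.sum_sub_distrib, ← Finset.sum_mul]
  ring

variable [Fintype B] {ν : B → ℝ} {b₀ : B}

theorem bernoulliExpect_wordIndicator (hν1 : ∑ b, ν b = 1) (w : List B) {i L : ℕ}
    (hL : i + w.length ≤ L) : bernoulliExpect ν b₀ L (wordIndicator w i) = wmeas ν w := by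
  induction w generalizing i with
  | nil =>
    rw [show wordIndicator [] i = fun _ => (1 : ℝ) from funext (wordIndicator_nil i),
      bernoulliExpect_const hν1]
    simp [wmeas]
  | cons b w ih =>
    simp only [List.length_cons] at hL
    have hdisj : Set.Ico (i + 1) (i + 1 + w.length) ⊆ ({i} : Set ℕ)ᶜ := fun n hn => by
      simp only [Set.mem_Ico] at hn; simp; omega
    have hsplit : wordIndicator (b :: w) i
        = (fun Y => if Y i = b then (1 : ℝ) else 0) * wordIndicator w (i + 1) :=
      funext (wordIndicator_cons b w i)
    rw [hsplit, bernoulliExpect_mul_of_dependsOn hν1 L (s := {i})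
      (fun Y Y' h => by rw [h i rfl]) ((dependsOn_wordIndicator w _).mono hdisj),
      bernoulliExpect_apply_coord hν1 (g := fun c => if c = b then (1 : ℝ) else 0)
        (by omega : i < L), ih (by omega)]
    simp [wmeas]

end WordIndicator

section FourthMoment

theorem DependsOn.mul {ι β : Type*} {α : ι → Type*} [Mul β] {f g : (Π i, α i) → β} {s : Set ι}
    (hf : DependsOn f s) (hg : DependsOn g s) : DependsOn (f * g) s :=
  fun _ _ h => by simp only [Pi.mul_apply, hf h, hg h]

/-- Indicator that the windows `[a, a + k)` and `[b, b + k)` meet. -/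
def windowOverlap (k a b : ℕ) : ℝ := if a < b + k ∧ b < a + k then 1 else 0

theorem windowOverlap_nonneg (k a b : ℕ) : 0 ≤ windowOverlap k a b := by
  unfold windowOverlap
  split_ifs <;> norm_num

theorem windowOverlap_eq_one {k a b : ℕ} (h : a < b + k ∧ b < a + k) : windowOverlap k a b = 1 :=
  if_pos h

theorem sum_windowOverlap_le (k N a : ℕ) : ∑ b ∈ Finset.range N, windowOverlap k a b ≤ 2 * k := by
  simp only [windowOverlap, Finset.sum_boole]
  calc (((Finset.range N).filter fun b => a < b + k ∧ b < a + k).card : ℝ)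
      ≤ (Finset.Ico (a + 1 - k) (a + k)).card := by
        gcongr
        intro b hb
        simp only [Finset.mem_filter, Finset.mem_Ico] at hb ⊢
        omega
    _ ≤ 2 * k := by
        rw [Nat.card_Ico]
        exact_mod_cast (by omega : a + k - (a + 1 - k) ≤ 2 * k)

theorem sum_pairings_eq {R : Type*} [CommSemiring R] (f : ℕ → ℕ → R) (s : Finset ℕ) :
    ∑ a ∈ s, ∑ b ∈ s, ∑ c ∈ s, ∑ d ∈ s, (f a b * f c d + f a c * f b d + f a d * f b c)
      = 3 * (∑ a ∈ s, ∑ b ∈ s, f a b) ^ 2 := by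
  have hsq : (∑ a ∈ s, ∑ b ∈ s, f a b) ^ 2 = ∑ a ∈ s, ∑ b ∈ s, ∑ c ∈ s, ∑ d ∈ s, f a c * f b d := by
    simp only [sq, Finset.sum_mul_sum]
  have h1 : ∑ a ∈ s, ∑ b ∈ s, ∑ c ∈ s, ∑ d ∈ s, f a b * f c d
      = ∑ a ∈ s, ∑ b ∈ s, ∑ c ∈ s, ∑ d ∈ s, f a c * f b d :=
    Finset.sum_congr rfl fun a _ => Finset.sum_comm
  have h3 : ∑ a ∈ s, ∑ b ∈ s, ∑ c ∈ s, ∑ d ∈ s, f a d * f b c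
      = ∑ a ∈ s, ∑ b ∈ s, ∑ c ∈ s, ∑ d ∈ s, f a c * f b d :=
    Finset.sum_congr rfl fun a _ => Finset.sum_congr rfl fun b _ => Finset.sum_comm
  simp only [Finset.sum_add_distrib, h1, h3, hsq]
  ring

variable {B : Type*} [Fintype B] {ν : B → ℝ} {b₀ : B} {L k : ℕ} {W : ℕ → (ℕ → B) → ℝ}

/-- A term of the expanded fourth moment vanishes as soon as one of its windows meets none of
the other three; otherwise the four windows pair off. -/
theorem abs_bernoulliExpect_mul_four_le (hν0 : ∀ b, 0 ≤ ν b) (hν1 : ∑ b, ν b = 1)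
    (hdep : ∀ i, DependsOn (W i) (Set.Ico i (i + k))) (hW : ∀ i Y, |W i Y| ≤ 1)
    {a b c d : ℕ} (hmean : ∀ i ∈ [a, b, c, d], bernoulliExpect ν b₀ L (W i) = 0) :
    |bernoulliExpect ν b₀ L (W a * W b * W c * W d)|
      ≤ windowOverlap k a b * windowOverlap k c d + windowOverlap k a c * windowOverlap k b d
        + windowOverlap k a d * windowOverlap k b c := by
  have isolated : ∀ {i x y z : ℕ}, i ∈ [a, b, c, d] →
      W a * W b * W c * W d = W i * (W x * W y * W z) → (x + k ≤ i ∨ i + k ≤ x) →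
      (y + k ≤ i ∨ i + k ≤ y) → (z + k ≤ i ∨ i + k ≤ z) →
      bernoulliExpect ν b₀ L (W a * W b * W c * W d) = 0 := by
    intro i x y z hi hperm hx hy hz
    have far : ∀ {j}, (j + k ≤ i ∨ i + k ≤ j) → Set.Ico j (j + k) ⊆ (Set.Ico i (i + k))ᶜ :=
      fun hj n hn => by simp only [Set.mem_Ico, Set.mem_compl_iff] at hn ⊢; omega
    rw [hperm, bernoulliExpect_mul_of_dependsOn hν1 L (hdep i)
      ((((hdep x).mono (far hx)).mul ((hdep y).mono (far hy))).mul ((hdep z).mono (far hz))),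
      hmean i hi, zero_mul]
  have hprod : ∀ x y z t, 0 ≤ windowOverlap k x y * windowOverlap k z t :=
    fun x y z t => mul_nonneg (windowOverlap_nonneg k x y) (windowOverlap_nonneg k z t)
  have hrhs : 0 ≤ windowOverlap k a b * windowOverlap k c d
      + windowOverlap k a c * windowOverlap k b d + windowOverlap k a d * windowOverlap k b c :=
    add_nonneg (add_nonneg (hprod a b c d) (hprod a c b d)) (hprod a d b c)
  by_cases ha : (b + k ≤ a ∨ a + k ≤ b) ∧ (c + k ≤ a ∨ a + k ≤ c) ∧ (d + k ≤ a ∨ a + k ≤ d)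
  · rwa [isolated (by simp) (by ring) ha.1 ha.2.1 ha.2.2, abs_zero]
  by_cases hb : (a + k ≤ b ∨ b + k ≤ a) ∧ (c + k ≤ b ∨ b + k ≤ c) ∧ (d + k ≤ b ∨ b + k ≤ d)
  · rwa [isolated (by simp) (by ring) hb.1 hb.2.1 hb.2.2, abs_zero]
  by_cases hc : (a + k ≤ c ∨ c + k ≤ a) ∧ (b + k ≤ c ∨ c + k ≤ b) ∧ (d + k ≤ c ∨ c + k ≤ d)
  · rwa [isolated (by simp) (by ring) hc.1 hc.2.1 hc.2.2, abs_zero]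
  by_cases hd : (a + k ≤ d ∨ d + k ≤ a) ∧ (b + k ≤ d ∨ d + k ≤ b) ∧ (c + k ≤ d ∨ d + k ≤ c)
  · rwa [isolated (by simp) (by ring) hd.1 hd.2.1 hd.2.2, abs_zero]
  -- three windows that all meet a fourth cannot be pairwise disjoint
  have pairing : (a < b + k ∧ b < a + k) ∧ (c < d + k ∧ d < c + k)
      ∨ (a < c + k ∧ c < a + k) ∧ (b < d + k ∧ d < b + k)
      ∨ (a < d + k ∧ d < a + k) ∧ (b < c + k ∧ c < b + k) := by
    omega
  have hterm : |bernoulliExpect ν b₀ L (W a * W b * W c * W d)| ≤ 1 :=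
    abs_bernoulliExpect_le hν0 hν1 L fun Y => by
      simp only [Pi.mul_apply, abs_mul]
      exact mul_le_one₀ (mul_le_one₀ (mul_le_one₀ (hW a Y) (abs_nonneg _) (hW b Y))
        (abs_nonneg _) (hW c Y)) (abs_nonneg _) (hW d Y)
  refine hterm.trans ?_
  rcases pairing with ⟨h₁, h₂⟩ | ⟨h₁, h₂⟩ | ⟨h₁, h₂⟩ <;>
    simp only [windowOverlap_eq_one h₁, windowOverlap_eq_one h₂, one_mul] <;>
    linarith [hprod a b c d, hprod a c b d, hprod a d b c]

theorem bernoulliExpect_sum_pow_four_le (hν0 : ∀ b, 0 ≤ ν b) (hν1 : ∑ b, ν b = 1)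
    (hdep : ∀ i, DependsOn (W i) (Set.Ico i (i + k))) (hW : ∀ i Y, |W i Y| ≤ 1) {N : ℕ}
    (hmean : ∀ i < N, bernoulliExpect ν b₀ L (W i) = 0) :
    bernoulliExpect ν b₀ L ((∑ i ∈ Finset.range N, W i) ^ 4) ≤ 12 * k ^ 2 * N ^ 2 := by
  set s := Finset.range N
  have hM : ∑ a ∈ s, ∑ b ∈ s, windowOverlap k a b ≤ 2 * k * N := by
    calc ∑ a ∈ s, ∑ b ∈ s, windowOverlap k a b ≤ ∑ _a ∈ s, (2 * k : ℝ) :=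
          Finset.sum_le_sum fun a _ => sum_windowOverlap_le k N a
      _ = 2 * k * N := by simp [s, mul_comm]
  have hM0 : 0 ≤ ∑ a ∈ s, ∑ b ∈ s, windowOverlap k a b :=
    Finset.sum_nonneg fun a _ => Finset.sum_nonneg fun b _ => windowOverlap_nonneg k a b
  have expand :
      (∑ i ∈ s, W i) ^ 4 = ∑ a ∈ s, ∑ b ∈ s, ∑ c ∈ s, ∑ d ∈ s, W a * W b * W c * W d := by
    rw [show (∑ i ∈ s, W i) ^ 4
        = (∑ a ∈ s, W a) * ((∑ b ∈ s, W b) * ((∑ c ∈ s, W c) * ∑ d ∈ s, W d)) by ring]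
    rw [Finset.sum_mul_sum, Finset.sum_mul_sum, Finset.sum_mul_sum]
    simp only [Finset.mul_sum, mul_assoc]
  rw [expand]
  simp only [map_sum]
  calc ∑ a ∈ s, ∑ b ∈ s, ∑ c ∈ s, ∑ d ∈ s, bernoulliExpect ν b₀ L (W a * W b * W c * W d)
      ≤ ∑ a ∈ s, ∑ b ∈ s, ∑ c ∈ s, ∑ d ∈ s, (windowOverlap k a b * windowOverlap k c d
          + windowOverlap k a c * windowOverlap k b d
          + windowOverlap k a d * windowOverlap k b c) := by
        gcongr with a ha b hb c hc d hd
        refine (le_abs_self _).trans (abs_bernoulliExpect_mul_four_le hν0 hν1 hdep hW ?_)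
        simp only [s, Finset.mem_range] at ha hb hc hd
        simp only [List.mem_cons, List.not_mem_nil, or_false]
        rintro i (rfl | rfl | rfl | rfl) <;> exact hmean _ ‹_›
    _ = 3 * (∑ a ∈ s, ∑ b ∈ s, windowOverlap k a b) ^ 2 := sum_pairings_eq _ s
    _ ≤ 3 * (2 * k * N) ^ 2 := by gcongr
    _ = 12 * k ^ 2 * N ^ 2 := by ring

end FourthMoment

theorem ae_tendsto_div_of_measure_le {Ω : Type*} [MeasurableSpace Ω] {P : Measure Ω}
    {S : ℕ → Ω → ℝ}
    (h : ∀ ε > 0, ∃ C, ∀ N : ℕ, 0 < N → P {ω | ε * N ≤ |S N ω|} ≤ ENNReal.ofReal (C / N ^ 2)) :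
    ∀ᵐ ω ∂P, Tendsto (fun N => S N ω / N) atTop (𝓝 0) := by
  have eventually_lt : ∀ ε > 0, ∀ᵐ ω ∂P, ∀ᶠ N : ℕ in atTop, |S N ω| < ε * N := by
    intro ε hε
    obtain ⟨C, hC⟩ := h ε hε
    have hsum : ∑' N : ℕ, P {ω | 0 < N ∧ ε * N ≤ |S N ω|} ≠ ⊤ := by
      refine ne_top_of_le_ne_top
        (((Real.summable_one_div_nat_pow.mpr one_lt_two).mul_left C).tsum_ofReal_ne_top)
        (ENNReal.tsum_le_tsum fun N => ?_)
      rcases N.eq_zero_or_pos with rfl | hN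
      · simp
      · simpa [hN, div_eq_mul_one_div C] using hC N hN
    filter_upwards [ae_eventually_notMem hsum] with ω hω
    filter_upwards [hω, eventually_gt_atTop 0] with N hN hN0
    simpa [hN0] using hN
  filter_upwards [ae_all_iff.mpr fun t : ℕ => eventually_lt (1 / (t + 1)) (by positivity)]
    with ω hω
  rw [Metric.tendsto_atTop]
  intro ε hε
  obtain ⟨t, ht⟩ := exists_nat_one_div_lt hε
  obtain ⟨N₀, hN₀⟩ := ((hω t).and (eventually_gt_atTop 0)).exists_forall_of_atTop
  refine ⟨N₀, fun N hN => ?_⟩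
  obtain ⟨hlt, hN0⟩ := hN₀ N hN
  have hNpos : (0 : ℝ) < N := by exact_mod_cast hN0
  rw [Real.dist_eq, sub_zero, abs_div, Nat.abs_cast, div_lt_iff₀ hNpos]
  exact hlt.trans_le (by gcongr)

section Deviations

variable {B : Type*} [Fintype B] [MeasurableSpace B] {ν : B → ℝ} {P : Measure (ℕ → B)}

theorem measure_le_abs_sum_le (hν0 : ∀ b, 0 ≤ ν b) (hν1 : ∑ b, ν b = 1)
    (hP : ∀ v : List B, P {Y | pref Y v.length = v} = ENNReal.ofReal (wmeas ν v))
    {b₀ : B} {k N : ℕ} {W : ℕ → (ℕ → B) → ℝ} (hdep : ∀ i, DependsOn (W i) (Set.Ico i (i + k)))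
    (hW : ∀ i Y, |W i Y| ≤ 1) (hmean : ∀ i < N, bernoulliExpect ν b₀ (N + k) (W i) = 0)
    {ε : ℝ} (hε : 0 < ε) (hN : 0 < N) :
    P {Y | ε * N ≤ |∑ i ∈ Finset.range N, W i Y|}
      ≤ ENNReal.ofReal (12 * k ^ 2 / ε ^ 4 / N ^ 2) := by
  set S := ∑ i ∈ Finset.range N, W i
  have hS : DependsOn (S ^ 4) (Set.Iio (N + k)) := fun Y Y' h => by
    simp only [S, Pi.pow_apply, Finset.sum_apply]
    congr 1
    refine Finset.sum_congr rfl fun i hi => hdep i fun n hn => h n ?_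
    simp only [Finset.mem_range, Set.mem_Ico, Set.mem_Iio] at hi hn ⊢
    omega
  have hNε : 0 < ε * N := by positivity
  calc P {Y | ε * N ≤ |∑ i ∈ Finset.range N, W i Y|}
      ≤ P {Y | (ε * N) ^ 4 ≤ (S ^ 4) Y} := measure_mono fun Y hY => by
        simp only [Set.mem_ofPred_eq, S, Pi.pow_apply, Finset.sum_apply] at hY ⊢
        exact (pow_le_pow_left₀ hNε.le hY 4).trans_eq (Even.pow_abs (by decide) _)
    _ ≤ ENNReal.ofReal (bernoulliExpect ν b₀ (N + k) (S ^ 4) / (ε * N) ^ 4) :=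
        measure_le_bernoulliExpect hν0 hP hS (fun Y => by simp only [Pi.pow_apply]; positivity)
          (by positivity)
    _ ≤ ENNReal.ofReal (12 * k ^ 2 * N ^ 2 / (ε * N) ^ 4) := by
        gcongr
        exact bernoulliExpect_sum_pow_four_le hν0 hν1 hdep hW hmean
    _ = ENNReal.ofReal (12 * k ^ 2 / ε ^ 4 / N ^ 2) := by
        congr 1
        field_simp

variable [DecidableEq B]

theorem ae_tendsto_sum_mul_wordIndicator_sub (hν0 : ∀ b, 0 ≤ ν b) (hν1 : ∑ b, ν b = 1)
    (hP : ∀ v : List B, P {Y | pref Y v.length = v} = ENNReal.ofReal (wmeas ν v))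
    (w : List B) {c : ℕ → ℝ} (hc : ∀ i, |c i| ≤ 1) :
    ∀ᵐ Y ∂P, Tendsto
      (fun N : ℕ => (∑ i ∈ Finset.range N, c i * (wordIndicator w i Y - wmeas ν w)) / N)
      atTop (𝓝 0) := by
  rcases isEmpty_or_nonempty B with hB | ⟨⟨b₀⟩⟩
  · exact Eventually.of_forall fun Y => isEmptyElim (Y 0)
  set p := wmeas ν w
  set W : ℕ → (ℕ → B) → ℝ := fun i Y => c i * (wordIndicator w i Y - p)
  have hdep : ∀ i, DependsOn (W i) (Set.Ico i (i + w.length)) := fun i Y Y' h => by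
    simp only [W, dependsOn_wordIndicator w i h]
  have hW : ∀ i Y, |W i Y| ≤ 1 := fun i Y => by
    have hp0 := wmeas_nonneg hν0 w
    have hp1 := wmeas_le_one hν0 hν1 w
    have hZ : |wordIndicator w i Y - p| ≤ 1 := by
      rw [abs_le]
      rcases wordIndicator_eq_zero_or_one w i Y with h | h <;> rw [h] <;> constructor <;> linarith
    simpa [W, abs_mul] using mul_le_one₀ (hc i) (abs_nonneg _) hZ
  have hmean : ∀ {i L}, i + w.length ≤ L → bernoulliExpect ν b₀ L (W i) = 0 := fun {i L} hL => by
    rw [show W i = c i • (wordIndicator w i - fun _ => p) from rfl, map_smul, map_sub,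
      bernoulliExpect_wordIndicator hν1 w hL, bernoulliExpect_const hν1, sub_self, smul_zero]
  exact ae_tendsto_div_of_measure_le fun ε hε => ⟨_, fun N hN =>
    measure_le_abs_sum_le hν0 hν1 hP hdep hW (fun i hi => hmean (by omega)) hε hN⟩

end Deviations

theorem random_join_normal_general
    {A B : Type*} [Fintype A] [DecidableEq A] [Fintype B] [DecidableEq B]
    [MeasurableSpace B]
    (μ : A → ℝ) (ν : B → ℝ) (hνpos : ∀ b, 0 < ν b)
    (hνsum : ∑ b, ν b = 1)
    (X : ℕ → A) (hX : BNormal μ X)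
    (P : Measure (ℕ → B))
    (hP : ∀ v : List B, P {Y | pref Y v.length = v} = ENNReal.ofReal (wmeas ν v)) :
    ∀ᵐ Y ∂P, BNormal (fun p : A × B => μ p.1 * ν p.2) (fun n => (X n, Y n)) := by
  have hword : ∀ w : List (A × B), ∀ᵐ Y ∂P, w ≠ [] →
      Tendsto (fun n => freq w (fun m => (X m, Y m)) n) atTop
        (𝓝 (wmeas (fun p : A × B => μ p.1 * ν p.2) w)) := by
    intro w
    have hc : ∀ i, |wordIndicator (w.map Prod.fst) i X| ≤ 1 := fun i => by
      rcases wordIndicator_eq_zero_or_one (w.map Prod.fst) i X with h | h <;> simp [h]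
    filter_upwards [ae_tendsto_sum_mul_wordIndicator_sub (fun b => (hνpos b).le) hνsum hP
      (w.map Prod.snd) hc] with Y hY hw
    have hN : Tendsto (fun n => n + 2 - w.length) atTop atTop :=
      tendsto_atTop_atTop.mpr fun N => ⟨N + w.length, fun n hn => by omega⟩
    have hXw := hX (w.map Prod.fst) (by simpa using hw)
    simp_rw [freq_join_eq w X Y (wmeas ν (w.map Prod.snd)), wmeas_join]
    simpa [mul_comm] using (hY.comp hN).add (hXw.const_mul (wmeas ν (w.map Prod.snd)))
  filter_upwards [ae_all_iff.mpr hword] with Y hY w hw using hY w hw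

/-- if `X` is `μ`-normal and `Y` is drawn according to the Bernoulli
product measure induced by `ν` on `B^ω` (characterized by its values on cylinders),
then almost surely the joined sequence `X ⊗ Y` is `(μ ⊗ ν)`-normal. -/
theorem random_join_normal
    {A B : Type*} [Fintype A] [DecidableEq A] [Fintype B] [DecidableEq B]
    [MeasurableSpace B]
    (μ : A → ℝ) (ν : B → ℝ) (hμpos : ∀ a, 0 < μ a) (hνpos : ∀ b, 0 < ν b)
    (hμsum : ∑ a, μ a = 1) (hνsum : ∑ b, ν b = 1)
    (X : ℕ → A) (hX : BNormal μ X)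
    (P : Measure (ℕ → B)) [IsProbabilityMeasure P]
    (hP : ∀ v : List B, P {Y | pref Y v.length = v} = ENNReal.ofReal (wmeas ν v)) :
    ∀ᵐ Y ∂P, BNormal (fun p : A × B => μ p.1 * ν p.2) (fun n => (X n, Y n)) :=
  random_join_normal_general μ ν hνpos hνsum X hX P hP
end

section
/- μ-block normality implies μ-normality: if X ∈ A^ω satisfies, for every nonempty word w of length k, that the fraction of indices i ≤ m with X[ki, ki+k−1] = w among the first m blocks of length k tends to μ(w), and more generally for every k and every block length ℓ ≥ k the block-occurrence frequencies match μ, then for every nonempty word w, the sliding-window frequency freq(w, X[0..n]) converges to μ(w). -/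
open Filter Topology

/-- Number of aligned (block) occurrences of `w` at positions `k·i`, `i < m`,
where `k = |w|`. -/
def nboccBlock {A : Type*} [DecidableEq A] (w : List A) (X : ℕ → A) (m : ℕ) : ℕ :=
  ((Finset.range m).filter
    (fun i => (List.range w.length).map (fun j => X (w.length * i + j)) = w)).card

/-- `X` is `μ`-block normal: every nonempty word occurs among aligned blocks with
asymptotic frequency `μ(w)`. -/
def BlockNormal {A : Type*} [DecidableEq A] (μ : A → ℝ) (X : ℕ → A) : Prop :=
  ∀ w : List A, w ≠ [] →
    Tendsto (fun m => (nboccBlock w X m : ℝ) / m) atTop (𝓝 (wmeas μ w))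


section AuxBN
set_option linter.unusedSectionVars false

variable {A : Type*} [DecidableEq A]

/-- Indicator that `w` occurs in `X` at position `i`. -/
def indOcc (X : ℕ → A) {k : ℕ} (w : Fin k → A) (i : ℕ) : ℕ :=
  if ∀ j : Fin k, X (i + j) = w j then 1 else 0

/-- Number of occurrences of `w` at positions `< M`. -/
def cntOcc (X : ℕ → A) {k : ℕ} (w : Fin k → A) (M : ℕ) : ℕ :=
  ∑ i ∈ Finset.range M, indOcc X w i

/-- Number of occurrences of `w` at positions `L*q + p`, `q < m`. -/
def NpOcc (X : ℕ → A) {k : ℕ} (w : Fin k → A) (L p m : ℕ) : ℕ :=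
  ∑ q ∈ Finset.range m, indOcc X w (L * q + p)

omit [DecidableEq A] in
lemma rangeMap_ofFn (F : ℕ → A) (n : ℕ) :
    (List.range n).map F = List.ofFn fun i : Fin n => F i := by
  apply List.ext_getElem <;> simp

lemma indOcc_le_one (X : ℕ → A) {k : ℕ} (w : Fin k → A) (i : ℕ) : indOcc X w i ≤ 1 := by
  rw [indOcc]; split <;> omega

lemma NpOcc_le (X : ℕ → A) {k : ℕ} (w : Fin k → A) (L p m : ℕ) : NpOcc X w L p m ≤ m := by
  calc NpOcc X w L p m ≤ ∑ _q ∈ Finset.range m, 1 :=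
        Finset.sum_le_sum fun q _ => indOcc_le_one X w _
    _ = m := by simp

lemma cntOcc_le_add (X : ℕ → A) {k : ℕ} (w : Fin k → A) {M M' : ℕ} (h : M ≤ M') :
    cntOcc X w M' ≤ cntOcc X w M + (M' - M) := by
  rw [cntOcc, show M' = M + (M' - M) by omega, Finset.sum_range_add, ← cntOcc]
  have : ∑ i ∈ Finset.range (M' - M), indOcc X w (M + i) ≤ ∑ _i ∈ Finset.range (M' - M), 1 :=
    Finset.sum_le_sum fun i _ => indOcc_le_one X w _
  simp at this
  omega

lemma cntOcc_mono (X : ℕ → A) {k : ℕ} (w : Fin k → A) {M M' : ℕ} (h : M ≤ M') :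
    cntOcc X w M ≤ cntOcc X w M' :=
  Finset.sum_le_sum_of_subset (Finset.range_subset_range.mpr h)

lemma cnt_mul (X : ℕ → A) {k : ℕ} (w : Fin k → A) (L m : ℕ) :
    cntOcc X w (L * m) = ∑ p ∈ Finset.range L, NpOcc X w L p m := by
  induction m with
  | zero => simp [cntOcc, NpOcc]
  | succ m ih =>
      rw [Nat.mul_succ, cntOcc, Finset.sum_range_add, ← cntOcc, ih]
      simp [NpOcc, Finset.sum_range_succ, Finset.sum_add_distrib]

lemma nbocc_ofFn_aux (X : ℕ → A) {k : ℕ} (w : Fin k → A) (n : ℕ) :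
    ((Finset.range n).filter
      (fun i => (List.range k).map (fun j => X (i + j)) = List.ofFn w)).card
      = cntOcc X w n := by
  rw [cntOcc, Finset.card_filter]
  refine Finset.sum_congr rfl fun i _ => ?_
  refine if_congr ?_ rfl rfl
  rw [rangeMap_ofFn, List.ofFn_inj, funext_iff]

lemma append_eq_iff {k p r : ℕ} (w : Fin k → A) (b : Fin (p + k + r) → A)
    (g : Fin p → A) (h : Fin r → A) :
    b = Fin.append (Fin.append g w) h ↔
      (∀ j : Fin k, b (Fin.castAdd r (Fin.natAdd p j)) = w j) ∧
      g = (fun i => b (Fin.castAdd r (Fin.castAdd k i))) ∧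
      h = (fun j => b (Fin.natAdd (p + k) j)) := by
  constructor
  · rintro rfl
    refine ⟨fun j => ?_, funext fun i => ?_, funext fun j => ?_⟩ <;>
      simp [Fin.append_left, Fin.append_right]
  · rintro ⟨hmid, rfl, rfl⟩
    funext i
    refine Fin.addCases (fun i => ?_) (fun j => ?_) i
    · rw [Fin.append_left]
      refine Fin.addCases (motive := fun i => b (Fin.castAdd r i)
          = Fin.append (fun i => b (Fin.castAdd r (Fin.castAdd k i))) w i)
        (fun i => ?_) (fun j => ?_) i
      · simp only [Fin.append_left]
      · simp only [Fin.append_right]; exact hmid j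
    · rw [Fin.append_right]

lemma sum_ite_block {k p r : ℕ} [Fintype A] (w : Fin k → A) (b : Fin (p + k + r) → A) :
    (∑ g : Fin p → A, ∑ h : Fin r → A,
      if b = Fin.append (Fin.append g w) h then (1:ℕ) else 0)
      = if (∀ j : Fin k, b (Fin.castAdd r (Fin.natAdd p j)) = w j) then (1:ℕ) else 0 := by
  simp only [append_eq_iff w b]
  by_cases hmid : ∀ j : Fin k, b (Fin.castAdd r (Fin.natAdd p j)) = w j
  · simp only [hmid, true_and, if_true]
    rw [Finset.sum_eq_single (fun i => b (Fin.castAdd r (Fin.castAdd k i)))]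
    · rw [Finset.sum_eq_single (fun j => b (Fin.natAdd (p + k) j))] <;> simp +contextual
    · intro g _ hg
      simp +contextual [hg]
    · simp
  · simp [hmid]

lemma Np_eq_sum [Fintype A] (X : ℕ → A) {k : ℕ} (w : Fin k → A) (p r m : ℕ) :
    NpOcc X w (p + k + r) p m
      = ∑ g : Fin p → A, ∑ h : Fin r → A,
          nboccBlock (List.ofFn (Fin.append (Fin.append g w) h)) X m := by
  have hblock : ∀ F : Fin (p + k + r) → A,
      nboccBlock (List.ofFn F) X m
        = ∑ q ∈ Finset.range m,
            if (fun j : Fin (p + k + r) => X ((p + k + r) * q + j)) = F then (1:ℕ) else 0 := by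
    intro F
    rw [nboccBlock, Finset.card_filter]
    refine Finset.sum_congr rfl fun q _ => ?_
    refine if_congr ?_ rfl rfl
    rw [List.length_ofFn, rangeMap_ofFn, List.ofFn_inj]
  have hper : ∀ q, indOcc X w ((p + k + r) * q + p)
      = ∑ g : Fin p → A, ∑ h : Fin r → A,
          if (fun j : Fin (p + k + r) => X ((p + k + r) * q + j))
              = Fin.append (Fin.append g w) h then (1:ℕ) else 0 := by
    intro q
    rw [sum_ite_block, indOcc]
    refine if_congr (forall_congr' fun j => ?_) rfl rfl
    simp [add_assoc]
  simp only [NpOcc, hper, hblock]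
  rw [Finset.sum_comm]
  exact Finset.sum_congr rfl fun g _ => Finset.sum_comm

omit [DecidableEq A] in
lemma wmeas_ofFn_prod (μ : A → ℝ) {n : ℕ} (f : Fin n → A) :
    wmeas μ (List.ofFn f) = ∏ i, μ (f i) := by
  rw [wmeas, List.map_ofFn, List.prod_ofFn]; rfl

lemma sum_wmeas_ofFn [Fintype A] (μ : A → ℝ) (hμsum : ∑ a, μ a = 1) (n : ℕ) :
    ∑ f : Fin n → A, wmeas μ (List.ofFn f) = 1 := by
  simp only [wmeas_ofFn_prod]
  rw [← Fintype.piFinset_univ, ← Finset.prod_univ_sum]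
  simp [hμsum]

lemma sum_sum_wmeas [Fintype A] (μ : A → ℝ) (hμsum : ∑ a, μ a = 1) {k : ℕ}
    (w : Fin k → A) (p r : ℕ) :
    ∑ g : Fin p → A, ∑ h : Fin r → A,
        wmeas μ (List.ofFn (Fin.append (Fin.append g w) h))
      = wmeas μ (List.ofFn w) := by
  have h1 : ∀ (g : Fin p → A) (h : Fin r → A),
      wmeas μ (List.ofFn (Fin.append (Fin.append g w) h))
        = wmeas μ (List.ofFn g) * wmeas μ (List.ofFn w) * wmeas μ (List.ofFn h) := by
    intro g h
    rw [List.ofFn_fin_append, List.ofFn_fin_append, wmeas, wmeas, wmeas, wmeas,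
      List.map_append, List.prod_append, List.map_append, List.prod_append]
  simp only [h1, ← Finset.mul_sum, sum_wmeas_ofFn μ hμsum r, mul_one]
  rw [← Finset.sum_mul, sum_wmeas_ofFn μ hμsum p, one_mul]

lemma Np_tendsto [Fintype A] {μ : A → ℝ} (hμsum : ∑ a, μ a = 1) {X : ℕ → A}
    (hX : BlockNormal μ X) {k : ℕ} (hk : 0 < k) (w : Fin k → A) (p r : ℕ) :
    Filter.Tendsto (fun m => (NpOcc X w (p + k + r) p m : ℝ) / m) Filter.atTop
      (nhds (wmeas μ (List.ofFn w))) := by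
  have h1 : ∀ m, (NpOcc X w (p + k + r) p m : ℝ) / m
      = ∑ g : Fin p → A, ∑ h : Fin r → A,
          (nboccBlock (List.ofFn (Fin.append (Fin.append g w) h)) X m : ℝ) / m := by
    intro m
    rw [Np_eq_sum]
    push_cast
    simp [Finset.sum_div]
  simp only [h1]
  rw [← sum_sum_wmeas μ hμsum w p r]
  refine tendsto_finset_sum _ fun g _ => tendsto_finset_sum _ fun h _ => ?_
  refine hX _ ?_
  intro hnil
  have := congrArg List.length hnil
  simp at this
  omega

end AuxBN

set_option maxHeartbeats 1000000 in
/-- `μ`-block normality implies `μ`-normality. -/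
theorem block_normal_implies_normal
    {A : Type*} [Fintype A] [DecidableEq A]
    (μ : A → ℝ) (hμpos : ∀ a, 0 < μ a) (hμsum : ∑ a, μ a = 1)
    (X : ℕ → A) (hX : BlockNormal μ X) :
    BNormal μ X := by
  intro w hw
  obtain ⟨k, w', rfl⟩ : ∃ (k : ℕ) (w' : Fin k → A), w = List.ofFn w' :=
    ⟨w.length, w.get, (List.ofFn_get w).symm⟩
  have hk : 0 < k := by
    rcases Nat.eq_zero_or_pos k with h | h
    · subst h; simp at hw
    · exact h
  set c := wmeas μ (List.ofFn w') with hc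
  have hcprod : c = ∏ i, μ (w' i) := wmeas_ofFn_prod μ w'
  have hc0 : 0 ≤ c := by
    rw [hcprod]; exact Finset.prod_nonneg fun i _ => (hμpos _).le
  have hμle1 : ∀ a, μ a ≤ 1 := by
    intro a
    rw [← hμsum]
    exact Finset.single_le_sum (fun a _ => (hμpos a).le) (Finset.mem_univ a)
  have hc1 : c ≤ 1 := by
    rw [hcprod]
    exact Finset.prod_le_one (fun i _ => (hμpos _).le) (fun i _ => hμle1 _)
  have hfreq : ∀ n, freq (List.ofFn w') X n
      = (cntOcc X w' (n + 2 - k) : ℝ) / ((n + 2 - k : ℕ) : ℝ) := by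
    intro n
    rw [freq, nbocc, List.length_ofFn, nbocc_ofFn_aux]
  rw [Metric.tendsto_atTop]
  intro ε' hε'
  set ε := min ε' 1 with hεdef
  have hε : 0 < ε := lt_min hε' one_pos
  have hε1 : ε ≤ 1 := min_le_right _ _
  have hεε' : ε ≤ ε' := min_le_left _ _
  -- choose the block length L
  set L := k + Nat.ceil (4 * (k : ℝ) / ε) with hLdef
  have hkL : k ≤ L := Nat.le_add_right _ _
  have hLpos : 0 < L := lt_of_lt_of_le hk hkL
  have hLr : (0 : ℝ) < L := by exact_mod_cast hLpos
  have hL4 : 4 * (k : ℝ) / ε ≤ L := by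
    have h0 : Nat.ceil (4 * (k : ℝ) / ε) ≤ L := by rw [hLdef]; omega
    calc 4 * (k : ℝ) / ε ≤ Nat.ceil (4 * (k : ℝ) / ε) := Nat.le_ceil _
      _ ≤ L := by exact_mod_cast h0
  have hkL4 : (k : ℝ) / L ≤ ε / 4 := by
    rw [div_le_div_iff₀ hLr (by norm_num : (0:ℝ) < 4)]
    have h8 : 4 * (k : ℝ) ≤ L * ε := by
      have := (div_le_iff₀ hε).mp hL4
      linarith
    linarith
  -- the good-part counting function and its limit
  set S : ℝ := ((L - k + 1 : ℕ) : ℝ) * c with hSdef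
  set G : ℕ → ℕ := fun m => ∑ p ∈ Finset.range (L - k + 1), NpOcc X w' L p m with hGdef
  have hG : Tendsto (fun m => ((G m : ℕ) : ℝ) / m) atTop (𝓝 S) := by
    have h1 : ∀ m, ((G m : ℕ) : ℝ) / m
        = ∑ p ∈ Finset.range (L - k + 1), (NpOcc X w' L p m : ℝ) / m := by
      intro m
      rw [hGdef]
      push_cast
      simp [Finset.sum_div]
    have h2 : S = ∑ _p ∈ Finset.range (L - k + 1), c := by
      rw [Finset.sum_const, Finset.card_range, nsmul_eq_mul, hSdef]
    simp only [h1]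
    rw [h2]
    refine tendsto_finset_sum _ fun p hp => ?_
    have hp' : p + k + (L - k - p) = L := by
      have := Finset.mem_range.mp hp; omega
    have := Np_tendsto hμsum hX hk w' p (L - k - p)
    rw [hp'] at this
    exact this
  -- useful comparisons for S
  have hcastL : ((L - k + 1 : ℕ) : ℝ) = (L : ℝ) - k + 1 := by
    push_cast [Nat.cast_sub hkL]; ring
  have hSL1 : S / L ≤ c := by
    rw [hSdef, hcastL, div_le_iff₀ hLr]
    have hk1 : (1 : ℝ) ≤ k := by exact_mod_cast hk
    nlinarith
  have hSL2 : c - S / L ≤ ε / 4 := by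
    have h1 : S / L = c - c * ((k : ℝ) - 1) / L := by
      rw [hSdef, hcastL]
      field_simp
      ring
    rw [h1]
    have hk1 : (1 : ℝ) ≤ k := by exact_mod_cast hk
    have h2 : c * ((k : ℝ) - 1) / L ≤ (k : ℝ) / L := by
      apply div_le_div₀ (by positivity) (by nlinarith) hLr le_rfl
    linarith
  -- extract eventual bound from hG
  rw [Metric.tendsto_atTop] at hG
  obtain ⟨m₀, hm₀⟩ := hG (L * ε / 8) (by positivity)
  set m₁ := max m₀ (Nat.ceil ((8 : ℝ) / ε) + 1) with hm₁def
  refine ⟨L * (m₁ + 1) + k, fun n hn => ?_⟩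
  set M := n + 2 - k with hMdef
  have hMge : L * (m₁ + 1) ≤ M := by omega
  set m := M / L with hmdef
  have hm1 : m₁ ≤ m := by
    rw [hmdef]
    refine (Nat.le_div_iff_mul_le hLpos).mpr ?_
    calc m₁ * L = L * m₁ := mul_comm _ _
      _ ≤ L * (m₁ + 1) := Nat.mul_le_mul_left _ (by omega)
      _ ≤ M := hMge
  have hmm : L * m ≤ M := by rw [hmdef, mul_comm]; exact Nat.div_mul_le_self M L
  have hmm2 : M < L * m + L := by
    have h1 : L * m + M % L = M := by rw [hmdef]; exact Nat.div_add_mod M L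
    have h2 : M % L < L := Nat.mod_lt M hLpos
    omega
  have hceil : Nat.ceil ((8 : ℝ) / ε) + 1 ≤ m₁ := le_max_right _ _
  have hm₀m : m₀ ≤ m := le_trans (le_max_left _ _) hm1
  have hmpos : 1 ≤ m := by omega
  have hMpos : 0 < M := lt_of_lt_of_le (Nat.mul_pos hLpos (Nat.succ_pos m₁)) hMge
  -- nat bounds
  have hb1 : G m ≤ cntOcc X w' M := by
    calc G m ≤ ∑ p ∈ Finset.range L, NpOcc X w' L p m := by
          exact Finset.sum_le_sum_of_subset (Finset.range_subset_range.mpr (by omega))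
      _ = cntOcc X w' (L * m) := (cnt_mul X w' L m).symm
      _ ≤ cntOcc X w' M := cntOcc_mono X w' hmm
  have hb2 : cntOcc X w' M ≤ G m + k * m + L := by
    have h3 : cntOcc X w' M ≤ cntOcc X w' (L * m) + L := by
      have := cntOcc_le_add X w' hmm
      omega
    have h4 : cntOcc X w' (L * m) ≤ G m + k * m := by
      rw [cnt_mul]
      have hsplit : Finset.range L = Finset.range ((L - k + 1) + (k - 1)) := by
        congr 1; omega
      rw [hsplit, Finset.sum_range_add]
      have h5 : ∑ x ∈ Finset.range (k - 1), NpOcc X w' L ((L - k + 1) + x) m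
          ≤ ∑ _x ∈ Finset.range (k - 1), m :=
        Finset.sum_le_sum fun x _ => NpOcc_le X w' L _ m
      simp only [Finset.sum_const, Finset.card_range, smul_eq_mul] at h5
      have : (k - 1) * m ≤ k * m := Nat.mul_le_mul_right m (by omega)
      simp only [hGdef]
      omega
    omega
  -- real arithmetic
  have hx := hm₀ m hm₀m
  rw [Real.dist_eq] at hx
  set x := ((G m : ℕ) : ℝ) / m with hxdef
  have hmr : (1 : ℝ) ≤ (m : ℝ) := by exact_mod_cast hmpos
  have hmr0 : (0 : ℝ) < (m : ℝ) := lt_of_lt_of_le one_pos hmr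
  have hMr : (0 : ℝ) < (M : ℝ) := by exact_mod_cast hMpos
  have hx0 : 0 ≤ x := by rw [hxdef]; positivity
  -- bounds on x / L
  have hus : |x / L - S / L| < ε / 8 := by
    rw [← sub_div, abs_div, abs_of_pos hLr, div_lt_iff₀ hLr]
    calc |x - S| < L * ε / 8 := hx
      _ = ε / 8 * L := by ring
  have hxL0 : 0 ≤ x / L := by positivity
  have habs := abs_lt.mp hus
  have hxLub : x / L < c + ε / 8 := by
    have := habs.1
    linarith
  have hxLlb : c - ε / 4 - ε / 8 < x / L := by
    have := habs.2
    linarith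
  have hxL2 : x / L ≤ 2 := by linarith
  -- the two freq bounds
  have hfr : freq (List.ofFn w') X n = (cntOcc X w' M : ℝ) / (M : ℝ) := by
    rw [hfreq n, hMdef]
  have hup : (cntOcc X w' M : ℝ) / (M : ℝ) ≤ x / L + (k : ℝ) / L + 1 / m := by
    have h6 : (cntOcc X w' M : ℝ) / (M : ℝ)
        ≤ ((G m : ℝ) + (k : ℝ) * m + L) / ((L : ℝ) * m) := by
      apply div_le_div₀ (by positivity) ?_ (by positivity) ?_
      · exact_mod_cast hb2
      · exact_mod_cast hmm
    have h7 : ((G m : ℝ) + (k : ℝ) * m + L) / ((L : ℝ) * m)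
        = x / L + (k : ℝ) / L + 1 / m := by
      rw [hxdef]
      field_simp
    linarith [h6, h7.le, h7.ge]
  have hlo : x / L - x / L / ((m : ℝ) + 1) ≤ (cntOcc X w' M : ℝ) / (M : ℝ) := by
    have h6 : ((G m : ℝ)) / ((L : ℝ) * ((m : ℝ) + 1)) ≤ (cntOcc X w' M : ℝ) / (M : ℝ) := by
      apply div_le_div₀ (by positivity) ?_ hMr ?_
      · exact_mod_cast hb1
      · have : (M : ℝ) ≤ (L : ℝ) * m + L := by exact_mod_cast hmm2.le
        linarith [this]
    have h7 : ((G m : ℝ)) / ((L : ℝ) * ((m : ℝ) + 1)) = x / L - x / L / ((m : ℝ) + 1) := by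
      rw [hxdef]
      field_simp
      ring
    linarith [h6, h7.le, h7.ge]
  -- smallness of 1/m and 2/m terms
  have hm8 : (8 : ℝ) / ε ≤ (m : ℝ) := by
    calc (8 : ℝ) / ε ≤ Nat.ceil ((8 : ℝ) / ε) := Nat.le_ceil _
      _ ≤ (m : ℝ) := by
        have : Nat.ceil ((8 : ℝ) / ε) ≤ m := by omega
        exact_mod_cast this
  have hεm : 8 ≤ ε * m := by
    have := (div_le_iff₀ hε).mp hm8
    linarith
  have h1m : 1 / (m : ℝ) ≤ ε / 8 := by
    rw [div_le_div_iff₀ hmr0 (by norm_num : (0:ℝ) < 8)]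
    linarith
  have h2m : x / L / ((m : ℝ) + 1) ≤ ε / 4 := by
    have h8 : x / L / ((m : ℝ) + 1) ≤ 2 / (m : ℝ) := by
      apply div_le_div₀ (by norm_num) hxL2 hmr0 (by linarith)
    have h9 : 2 / (m : ℝ) ≤ ε / 4 := by
      rw [div_le_div_iff₀ hmr0 (by norm_num : (0:ℝ) < 4)]
      linarith
    linarith
  -- conclude
  rw [hfr, Real.dist_eq, abs_sub_lt_iff]
  constructor
  · calc (cntOcc X w' M : ℝ) / (M : ℝ) - c ≤ x / L + (k : ℝ) / L + 1 / m - c := by linarith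
      _ < ε' := by linarith
    -- uses hxLub, hkL4, h1m : < ε/8 + ε/4 + ε/8 + something
  · calc c - (cntOcc X w' M : ℝ) / (M : ℝ) ≤ c - (x / L - x / L / ((m : ℝ) + 1)) := by linarith
      _ < ε' := by linarith
end
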